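/- Let M ∈ ℂ^{m×n} and let R be a complex trigonometric polynomial of order 2n−1 with 𝒢_M(R) nonempty. Then R takes real values around the unit circle if and only if 𝒢_M(R) is stable under conjugate transposition, i.e. for every G ∈ 𝒢_M(R) one also has G^* ∈ 𝒢_M(R). -/

import Mathlib

set_option autoImplicit false

open Matrix Complex
open scoped ComplexOrder

noncomputable section

/-- `e^{2πiν}` for a real `ν`. -/
def expc (ν : ℝ) : ℂ := Complex.exp (2 * Real.pi * Complex.I * ν)

/-- The power vector `ψ_n(z) = (1, z, …, z^{n−1})`. -/
def psi (n : ℕ) (z : ℂ) : Fin n → ℂ := fun k => z ^ (k : ℕ)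

/-- `ψ_n(z⁻¹)^T (M^* G M) ψ_n(z)`. -/
def gramEval {m n : ℕ} (M : Matrix (Fin m) (Fin n) ℂ) (G : Matrix (Fin m) (Fin m) ℂ)
    (z : ℂ) : ℂ :=
  dotProduct (psi n z⁻¹) ((Mᴴ * G * M).mulVec (psi n z))

/-- Evaluation of the complex trigonometric polynomial of order `2n−1` with
coefficients `r : ℤ → ℂ`: `R(z) = Σ_{k=−n+1}^{n−1} r_k z^k`. -/
def trigEval (n : ℕ) (r : ℤ → ℂ) (z : ℂ) : ℂ :=
  ∑ k ∈ Finset.Icc (-(n : ℤ) + 1) ((n : ℤ) - 1), r k * z ^ k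

/-- Membership in the compact Gram set `𝒢_M(R)`. -/
def InGram {m n : ℕ} (M : Matrix (Fin m) (Fin n) ℂ) (R : ℂ → ℂ)
    (G : Matrix (Fin m) (Fin m) ℂ) : Prop :=
  ∀ z : ℂ, z ≠ 0 → R z = gramEval M G z

lemma gram_conj {m n : ℕ} (M : Matrix (Fin m) (Fin n) ℂ) (G : Matrix (Fin m) (Fin m) ℂ)
    (z : ℂ) :
    gramEval M Gᴴ z = starRingEnd ℂ (gramEval M G ((starRingEnd ℂ z)⁻¹)) := by
  have hA : Mᴴ * Gᴴ * M = (Mᴴ * G * M)ᴴ := by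
    simp [Matrix.conjTranspose_mul, Matrix.mul_assoc]
  rw [gramEval, gramEval, hA]
  simp only [dotProduct, Matrix.mulVec, dotProduct, map_sum, _root_.map_mul,
    Matrix.conjTranspose_apply, psi, map_pow, map_inv₀, Complex.conj_conj, inv_inv,
    Finset.mul_sum, RCLike.star_def]
  rw [Finset.sum_comm]
  refine Finset.sum_congr rfl fun j _ => Finset.sum_congr rfl fun k _ => ?_
  ring

lemma expc_ne_zero (ν : ℝ) : expc ν ≠ 0 := Complex.exp_ne_zero _

lemma conj_expc (ν : ℝ) : (starRingEnd ℂ) (expc ν) = (expc ν)⁻¹ := by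
  rw [expc, ← Complex.exp_conj, ← Complex.exp_neg]
  congr 1
  simp [Complex.ext_iff]

lemma expc_injOn : Set.InjOn expc (Set.Ico (0:ℝ) 1) := by
  intro a ha b hb hab
  rw [expc, expc] at hab
  have h1 : Complex.exp (2 * Real.pi * Complex.I * a - 2 * Real.pi * Complex.I * b) = 1 := by
    rw [Complex.exp_sub, hab]
    exact div_self (Complex.exp_ne_zero _)
  rw [Complex.exp_eq_one_iff] at h1
  obtain ⟨k, hk⟩ := h1
  have h2 : (2 * Real.pi * Complex.I) * ((a:ℂ) - b) = (2 * Real.pi * Complex.I) * (k:ℂ) := by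
    rw [mul_sub]; rw [hk]; ring
  have hne : (2 * (Real.pi:ℂ) * Complex.I) ≠ 0 := by
    simp [Real.pi_ne_zero, Complex.I_ne_zero]
  have h3 : (a:ℂ) - b = (k:ℂ) := mul_left_cancel₀ hne h2
  have h4 : a - b = (k:ℝ) := by exact_mod_cast h3
  have h5 : -1 < (k:ℝ) ∧ (k:ℝ) < 1 := by
    constructor <;> nlinarith [ha.1, ha.2, hb.1, hb.2]
  have hk0 : k = 0 := by
    have h6 : -1 < k ∧ k < 1 := by exact_mod_cast h5
    omega
  rw [hk0] at h4
  push_cast at h4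
  linarith

lemma laurent_vanish (n : ℕ) (c : ℤ → ℂ)
    (h : ∀ ν : ℝ, trigEval n c (expc ν) = 0) :
    ∀ z : ℂ, z ≠ 0 → trigEval n c z = 0 := by
  set p : Polynomial ℂ :=
    ∑ k ∈ Finset.Icc (-(n : ℤ) + 1) ((n : ℤ) - 1),
      Polynomial.C (c k) * Polynomial.X ^ (k + (n - 1 : ℤ)).toNat with hp
  have key : ∀ z : ℂ, z ≠ 0 → p.eval z = z ^ ((n:ℤ) - 1) * trigEval n c z := by
    intro z hz
    rw [hp, trigEval, Polynomial.eval_finset_sum, Finset.mul_sum]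
    refine Finset.sum_congr rfl fun k hk => ?_
    simp only [Finset.mem_Icc] at hk
    rw [Polynomial.eval_mul, Polynomial.eval_C, Polynomial.eval_pow, Polynomial.eval_X]
    rw [← zpow_natCast z, Int.toNat_of_nonneg (by omega)]
    rw [zpow_add₀ hz]
    ring
  have hp0 : p = 0 := by
    apply Polynomial.eq_zero_of_infinite_isRoot
    have hinf : (expc '' Set.Ico (0:ℝ) 1).Infinite :=
      (Set.Ico_infinite (by norm_num)).image expc_injOn
    apply Set.Infinite.mono ?_ hinf
    rintro z ⟨ν, _, rfl⟩
    simp only [Set.mem_setOf_eq, Polynomial.IsRoot]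
    rw [key _ (expc_ne_zero ν), h ν, mul_zero]
  intro z hz
  have hkey := key z hz
  rw [hp0] at hkey
  simp only [Polynomial.eval_zero] at hkey
  rcases mul_eq_zero.mp hkey.symm with h0 | h0
  · exact absurd h0 (zpow_ne_zero _ hz)
  · exact h0

lemma conj_trigEval (n : ℕ) (rc : ℤ → ℂ) (z : ℂ) :
    starRingEnd ℂ (trigEval n rc ((starRingEnd ℂ z)⁻¹)) =
      trigEval n (fun k => starRingEnd ℂ (rc (-k))) z := by
  rw [trigEval, trigEval, map_sum]
  refine Finset.sum_nbij' (i := fun k => -k) (j := fun k => -k) ?_ ?_ ?_ ?_ ?_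
  · intro a ha; simp only [Finset.mem_Icc] at *; omega
  · intro a ha; simp only [Finset.mem_Icc] at *; omega
  · intro a _; ring
  · intro a _; ring
  · intro a _
    rw [_root_.map_mul, map_zpow₀, map_inv₀, Complex.conj_conj, neg_neg, _root_.inv_zpow,
      ← _root_.zpow_neg]

lemma trig_sub (n : ℕ) (c d : ℤ → ℂ) (z : ℂ) :
    trigEval n (fun k => c k - d k) z = trigEval n c z - trigEval n d z := by
  simp [trigEval, ← Finset.sum_sub_distrib, sub_mul]

/-- for `M ∈ ℂ^{m×n}` and a trigonometric polynomial `R` of order `2n−1`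
with `𝒢_M(R)` nonempty, `R` takes real values around the unit circle iff `𝒢_M(R)` is
stable under conjugate transposition. -/
theorem stmt6 {m n : ℕ}
    (M : Matrix (Fin m) (Fin n) ℂ)
    (rc : ℤ → ℂ) (R : ℂ → ℂ) (hR : ∀ z : ℂ, R z = trigEval n rc z)
    (hne : ∃ G, InGram M R G) :
    (∀ ν : ℝ, (R (expc ν)).im = 0) ↔
      ∀ G : Matrix (Fin m) (Fin m) ℂ, InGram M R G → InGram M R Gᴴ := by
  constructor
  · intro hreal G hG z hz
    set rc' : ℤ → ℂ := fun k => starRingEnd ℂ (rc (-k)) with hrc'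
    -- on the circle, trigEval rc = trigEval rc'
    have hd : ∀ w : ℂ, w ≠ 0 → trigEval n rc w = trigEval n rc' w := by
      have hvan : ∀ ν : ℝ, trigEval n (fun k => rc k - rc' k) (expc ν) = 0 := by
        intro ν
        rw [trig_sub]
        have h1 : trigEval n rc' (expc ν) =
            starRingEnd ℂ (trigEval n rc ((starRingEnd ℂ (expc ν))⁻¹)) :=
          (conj_trigEval n rc (expc ν)).symm
        rw [conj_expc, inv_inv] at h1
        have h2 : starRingEnd ℂ (R (expc ν)) = R (expc ν) :=
          Complex.conj_eq_iff_im.mpr (hreal ν)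
        rw [hR] at h2
        rw [h1, h2, sub_self]
      intro w hw
      have := laurent_vanish n (fun k => rc k - rc' k) hvan w hw
      rw [trig_sub] at this
      exact sub_eq_zero.mp this
    have hw : ((starRingEnd ℂ) z)⁻¹ ≠ 0 := by
      simp [hz]
    rw [gram_conj, ← hG _ hw, hR, hR, conj_trigEval]
    exact hd z hz
  · intro hstab ν
    obtain ⟨G, hG⟩ := hne
    have hG' := hstab G hG
    have he := expc_ne_zero ν
    have h1 : R (expc ν) = starRingEnd ℂ (R (expc ν)) := by
      have h2 := hG' (expc ν) he
      rw [gram_conj, conj_expc, inv_inv, ← hG _ he] at h2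
      exact h2
    rw [← Complex.conj_eq_iff_im]
    exact h1.symm
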